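/- Let N ≥ 2. Set ζ = (N−1, N−2, …, 2, 1) ∈ ℤ^{N-1} and ρ = (N−1, N−2, …, 2, 1, 0) ∈ ℤ^N. Suppose μ = (μ_1 ≥ μ_2 ≥ … ≥ μ_{N-1}) ∈ ℤ^{N-1} and ν = (ν_1 ≥ ν_2 ≥ … ≥ ν_N) ∈ ℤ^N form a relevant bisignature, i.e. they satisfy: for every 1 ≤ i ≤ N−1, if ν_i = ν_{i+1} then ν_i + μ_i = 0, and for every 2 ≤ i ≤ N−1, if μ_{i-1} = μ_i then ν_i + μ_i = 0. If moreover (ζ,ρ) − (μ,ν) lies in the ℕ-span of the simple roots α_1,…,α_{2N-2} (where α_{2i-1} = ε_i − δ_i and α_{2i} = δ_i − ε_{i+1} in ℤ^{N-1} ⊕ ℤ^N), then (μ,ν) = (ζ,ρ). In other words, (ζ,ρ) is the unique relevant bisignature dominated by (ζ,ρ). -/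

import Mathlib

/-- The weight lattice `X = ℤ^{N-1} ⊕ ℤ^N` of `GL(N-1|N)`. -/
abbrev WeightLattice (N : ℕ) := (Fin (N - 1) → ℤ) × (Fin N → ℤ)

/-- The basis vector `δ_i` of the first factor `ℤ^{N-1}`. -/
def deltaB (N : ℕ) (i : Fin (N - 1)) : WeightLattice N := (Pi.single i 1, 0)

/-- The basis vector `ε_i` of the second factor `ℤ^N`. -/
def epsB (N : ℕ) (i : Fin N) : WeightLattice N := (0, Pi.single i 1)

/-- The simple roots of `gl(N-1|N)` for the mixed Borel (0-indexed):
`α_{2i} = ε_i - δ_i`, `α_{2i+1} = δ_i - ε_{i+1}` for `0 ≤ i ≤ N-2`. -/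
def glRoot (N : ℕ) (j : Fin (2 * N - 2)) : WeightLattice N :=
  if (j : ℕ) % 2 = 0 then
    epsB N ⟨(j : ℕ) / 2, by have := j.isLt; omega⟩ -
      deltaB N ⟨(j : ℕ) / 2, by have := j.isLt; omega⟩
  else
    deltaB N ⟨(j : ℕ) / 2, by have := j.isLt; omega⟩ -
      epsB N ⟨(j : ℕ) / 2 + 1, by have := j.isLt; omega⟩

/-- The signature `ζ = (N-1, N-2, …, 2, 1)` (0-indexed: `ζ_i = N - 1 - i`). -/
def zetaSig (N : ℕ) : Fin (N - 1) → ℤ := fun i => (N : ℤ) - 1 - (i : ℕ)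

/-- The signature `ρ = (N-1, N-2, …, 2, 1, 0)` (0-indexed: `ρ_i = N - 1 - i`). -/
def rhoSig (N : ℕ) : Fin N → ℤ := fun i => (N : ℤ) - 1 - (i : ℕ)

/-!
In the coordinates `ε₀, δ₀, ε₁, δ₁, …, ε_{N-1}` the simple roots are the differences `e_j - e_{j+1}`
of consecutive unit vectors, so `(ζ,ρ) - (μ,ν)` lies in their `ℕ`-span exactly when its partial sums
are nonnegative and its total sum vanishes. If `ν_i + μ_i = 0`, the tail sum from position `2i` is
`≤ 0`, and monotonicity of `μ, ν` bounds it below by `2(N-1-i) - ν_i`; so `ν_i ≥ 2(N-1-i)`.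
Starting from `ν_0 ≤ N-1`, a stall `ν_i = ν_{i+1}` would be relevant and contradict `ν_i ≤ N-1-i`;
hence `ν` decreases strictly from at most `N-1` to at least `0`, i.e. `ν = ρ`. The same bound rules
out stalls of `μ`, giving `μ ≤ ζ`, and the vanishing total sum forces `μ = ζ`.
-/

open Finset

theorem Finset.sum_range_two_mul {M : Type*} [AddCommMonoid M] (f : ℕ → M) (n : ℕ) :
    ∑ s ∈ range (2 * n), f s = ∑ k ∈ range n, (f (2 * k) + f (2 * k + 1)) := by
  induction n with
  | zero => simp
  | succ n ih => rw [Nat.mul_succ, sum_range_succ, sum_range_succ, sum_range_succ, ih, add_assoc]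

namespace WeightLattice

def interleave (N : ℕ) : WeightLattice N →+ (ℕ → ℤ) where
  toFun x s :=
    if s % 2 = 0 then (if h : s / 2 < N then x.2 ⟨s / 2, h⟩ else 0)
    else (if h : s / 2 < N - 1 then x.1 ⟨s / 2, h⟩ else 0)
  map_zero' := by ext s; simp
  map_add' x y := by ext s; simp only [Prod.fst_add, Prod.snd_add, Pi.add_apply]; split_ifs <;> simp

variable {N : ℕ}

lemma interleave_two_mul (x : WeightLattice N) (k : ℕ) (h : k < N) :
    interleave N x (2 * k) = x.2 ⟨k, h⟩ := by
  simp [interleave, h]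

lemma interleave_two_mul_add_one (x : WeightLattice N) (k : ℕ) (h : k < N - 1) :
    interleave N x (2 * k + 1) = x.1 ⟨k, h⟩ := by
  have h2 : (2 * k + 1) / 2 = k := by omega
  simp [interleave, h2, h, Nat.add_mod]

lemma interleave_epsB (i : Fin N) : interleave N (epsB N i) = Pi.single (2 * (i : ℕ)) 1 := by
  ext s
  simp only [interleave, epsB, AddMonoidHom.coe_mk, ZeroHom.coe_mk, Pi.single_apply, Fin.ext_iff,
    Pi.zero_apply]
  split_ifs <;> omega

lemma interleave_deltaB (i : Fin (N - 1)) :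
    interleave N (deltaB N i) = Pi.single (2 * (i : ℕ) + 1) 1 := by
  ext s
  simp only [interleave, deltaB, AddMonoidHom.coe_mk, ZeroHom.coe_mk, Pi.single_apply, Fin.ext_iff,
    Pi.zero_apply]
  split_ifs <;> omega

lemma interleave_glRoot (j : Fin (2 * N - 2)) :
    interleave N (glRoot N j) = Pi.single (j : ℕ) 1 - Pi.single ((j : ℕ) + 1) 1 := by
  unfold glRoot
  split_ifs with hj
  · rw [map_sub, interleave_epsB, interleave_deltaB]
    rw [show 2 * ((j : ℕ) / 2) = j by omega]
  · rw [map_sub, interleave_epsB, interleave_deltaB]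
    rw [show 2 * ((j : ℕ) / 2) + 1 = j by omega, show 2 * ((j : ℕ) / 2 + 1) = j + 1 by omega]

lemma sum_range_interleave_glRoot (j : Fin (2 * N - 2)) (t : ℕ) :
    ∑ s ∈ range t, interleave N (glRoot N j) s = if (j : ℕ) + 1 = t then 1 else 0 := by
  simp only [interleave_glRoot, Pi.sub_apply, sum_sub_distrib, sum_pi_single', mem_range]
  split_ifs <;> omega

lemma sum_range_interleave_sum_smul_glRoot (a : Fin (2 * N - 2) → ℤ) (t : ℕ) :
    ∑ s ∈ range t, interleave N (∑ j, a j • glRoot N j) s =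
      ∑ j : Fin (2 * N - 2), if (j : ℕ) + 1 = t then a j else 0 := by
  simp only [map_sum, map_zsmul, Finset.sum_apply, Pi.smul_apply, smul_eq_mul]
  rw [sum_comm]
  simp only [← mul_sum, sum_range_interleave_glRoot, mul_ite, mul_one, mul_zero]

lemma sum_range_interleave_sum_natCast_smul_glRoot_nonneg (a : Fin (2 * N - 2) → ℕ) (t : ℕ) :
    0 ≤ ∑ s ∈ range t, interleave N (∑ j, (a j : ℤ) • glRoot N j) s := by
  rw [sum_range_interleave_sum_smul_glRoot]
  exact sum_nonneg fun j _ => by split_ifs <;> positivity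

lemma sum_range_interleave_sum_smul_glRoot_eq_zero (a : Fin (2 * N - 2) → ℤ) :
    ∑ s ∈ range (2 * N - 1), interleave N (∑ j, a j • glRoot N j) s = 0 := by
  rw [sum_range_interleave_sum_smul_glRoot]
  exact sum_eq_zero fun j _ => if_neg (by omega)

end WeightLattice

open WeightLattice

section

variable {N : ℕ}

structure IsRelevantBisignature (μ : Fin (N - 1) → ℤ) (ν : Fin N → ℤ) : Prop where
  antitone_fst : Antitone μ
  antitone_snd : Antitone ν
  add_eq_zero_of_snd_eq : ∀ i : ℕ, (h : i + 1 < N) → ν ⟨i, Nat.lt_of_succ_lt h⟩ = ν ⟨i + 1, h⟩ →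
    ν ⟨i, Nat.lt_of_succ_lt h⟩ + μ ⟨i, Nat.lt_sub_of_add_lt h⟩ = 0
  add_eq_zero_of_fst_eq : ∀ i : ℕ, 1 ≤ i → (h : i < N - 1) →
    μ ⟨i - 1, (Nat.sub_le i 1).trans_lt h⟩ = μ ⟨i, h⟩ → ν ⟨i, Nat.lt_of_lt_pred h⟩ + μ ⟨i, h⟩ = 0

def defect (μ : Fin (N - 1) → ℤ) (ν : Fin N → ℤ) : ℕ → ℤ :=
  interleave N ((zetaSig N, rhoSig N) - (μ, ν))

variable {μ : Fin (N - 1) → ℤ} {ν : Fin N → ℤ}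

lemma defect_two_mul (k : ℕ) (h : k < N) : defect μ ν (2 * k) = (N : ℤ) - 1 - k - ν ⟨k, h⟩ := by
  rw [defect, interleave_two_mul _ k h]
  rfl

lemma defect_two_mul_add_one (k : ℕ) (h : k < N - 1) :
    defect μ ν (2 * k + 1) = (N : ℤ) - 1 - k - μ ⟨k, h⟩ := by
  rw [defect, interleave_two_mul_add_one _ k h]
  rfl

lemma sum_range_defect_eq (h : 0 < N) :
    ∑ s ∈ range (2 * N - 1), defect μ ν s =
      ∑ k ∈ range (N - 1), (defect μ ν (2 * k) + defect μ ν (2 * k + 1)) -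
        ν ⟨N - 1, by omega⟩ := by
  rw [show 2 * N - 1 = 2 * (N - 1) + 1 by omega, sum_range_succ, sum_range_two_mul,
    defect_two_mul _ (by omega)]
  push_cast [Nat.cast_sub h]
  ring

lemma nu_zero_le (hS : ∀ t, 0 ≤ ∑ s ∈ range t, defect μ ν s) (h : 0 < N) :
    ν ⟨0, h⟩ ≤ (N : ℤ) - 1 := by
  have := hS 1
  rw [sum_range_one, ← mul_zero 2, defect_two_mul 0 h] at this
  linarith

lemma nu_last_nonneg (hS : ∀ t, 0 ≤ ∑ s ∈ range t, defect μ ν s)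
    (hT : ∑ s ∈ range (2 * N - 1), defect μ ν s = 0) (h : 0 < N) :
    0 ≤ ν ⟨N - 1, by omega⟩ := by
  have := hS (2 * (N - 1))
  rw [sum_range_two_mul] at this
  rw [sum_range_defect_eq h] at hT
  linarith

lemma two_mul_le_nu_of_add_eq_zero (hμ : Antitone μ) (hν : Antitone ν)
    (hS : ∀ t, 0 ≤ ∑ s ∈ range t, defect μ ν s) (hT : ∑ s ∈ range (2 * N - 1), defect μ ν s = 0)
    (i : ℕ) (h : i < N - 1) (h0 : ν ⟨i, by omega⟩ + μ ⟨i, h⟩ = 0) :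
    2 * ((N : ℤ) - 1 - i) ≤ ν ⟨i, by omega⟩ := by
  let pair k := defect μ ν (2 * k) + defect μ ν (2 * k + 1)
  have hpair : ∀ k (hk : k < N - 1),
      pair k = 2 * ((N : ℤ) - 1 - k) - ν ⟨k, by omega⟩ - μ ⟨k, hk⟩ := fun k hk => by
    simp only [pair]
    rw [defect_two_mul k (by omega), defect_two_mul_add_one k hk]
    ring
  have hhead : 0 ≤ ∑ k ∈ range i, pair k := by
    simpa only [sum_range_two_mul] using hS (2 * i)
  have htail : pair i ≤ ∑ k ∈ Ico i (N - 1), pair k := by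
    refine single_le_sum (fun k hk => ?_) (by simp [h])
    obtain ⟨hik, hk⟩ := mem_Ico.mp hk
    have := hν (Fin.mk_le_mk.mpr hik : (⟨i, by omega⟩ : Fin N) ≤ ⟨k, by omega⟩)
    have := hμ (Fin.mk_le_mk.mpr hik : (⟨i, h⟩ : Fin (N - 1)) ≤ ⟨k, hk⟩)
    rw [hpair k hk]
    omega
  have hlast := hν (Fin.mk_le_mk.mpr (by omega) : (⟨i, by omega⟩ : Fin N) ≤ ⟨N - 1, by omega⟩)
  rw [sum_range_defect_eq (by omega), ← sum_range_add_sum_Ico _ h.le] at hT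
  linarith [hpair i h]

namespace IsRelevantBisignature

lemma nu_succ_lt_of_le (hrel : IsRelevantBisignature μ ν)
    (hS : ∀ t, 0 ≤ ∑ s ∈ range t, defect μ ν s) (hT : ∑ s ∈ range (2 * N - 1), defect μ ν s = 0)
    (i : ℕ) (h : i + 1 < N) (hi : ν ⟨i, by omega⟩ ≤ (N : ℤ) - 1 - i) :
    ν ⟨i + 1, h⟩ < ν ⟨i, by omega⟩ := by
  refine lt_of_le_of_ne (hrel.antitone_snd (Fin.mk_le_mk.mpr (by omega))) fun heq => ?_
  have := two_mul_le_nu_of_add_eq_zero hrel.antitone_fst hrel.antitone_snd hS hT i (by omega)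
    (hrel.add_eq_zero_of_snd_eq i h heq.symm)
  omega

lemma nu_apply_le (hrel : IsRelevantBisignature μ ν)
    (hS : ∀ t, 0 ≤ ∑ s ∈ range t, defect μ ν s) (hT : ∑ s ∈ range (2 * N - 1), defect μ ν s = 0)
    (k : ℕ) (h : k < N) : ν ⟨k, h⟩ ≤ (N : ℤ) - 1 - k := by
  induction k with
  | zero => simpa using nu_zero_le hS h
  | succ k ih =>
    have hk := ih (by omega)
    have := hrel.nu_succ_lt_of_le hS hT k h hk
    omega

lemma le_nu_apply (hrel : IsRelevantBisignature μ ν)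
    (hS : ∀ t, 0 ≤ ∑ s ∈ range t, defect μ ν s) (hT : ∑ s ∈ range (2 * N - 1), defect μ ν s = 0)
    (k : ℕ) (h : k < N) : (N : ℤ) - 1 - k ≤ ν ⟨k, h⟩ := by
  induction hd : N - 1 - k generalizing k with
  | zero =>
    obtain rfl : k = N - 1 := by omega
    have := nu_last_nonneg hS hT (by omega)
    omega
  | succ d ih =>
    have := ih (k + 1) (by omega) (by omega)
    have := hrel.nu_succ_lt_of_le hS hT k (by omega) (hrel.nu_apply_le hS hT k h)
    omega

lemma nu_eq_rhoSig (hrel : IsRelevantBisignature μ ν)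
    (hS : ∀ t, 0 ≤ ∑ s ∈ range t, defect μ ν s) (hT : ∑ s ∈ range (2 * N - 1), defect μ ν s = 0) :
    ν = rhoSig N :=
  funext fun k => le_antisymm (hrel.nu_apply_le hS hT k k.isLt) (hrel.le_nu_apply hS hT k k.isLt)

lemma mu_apply_le (hrel : IsRelevantBisignature μ ν)
    (hS : ∀ t, 0 ≤ ∑ s ∈ range t, defect μ ν s) (hT : ∑ s ∈ range (2 * N - 1), defect μ ν s = 0)
    (hν : ν = rhoSig N) (k : ℕ) (h : k < N - 1) : μ ⟨k, h⟩ ≤ (N : ℤ) - 1 - k := by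
  induction k with
  | zero =>
    have := hS (2 * 1)
    rw [sum_range_two_mul, sum_range_one, defect_two_mul 0 (by omega),
      defect_two_mul_add_one 0 h, hν] at this
    simp only [rhoSig] at this
    omega
  | succ k ih =>
    have hle := hrel.antitone_fst
      (Fin.mk_le_mk.mpr k.le_succ : (⟨k, by omega⟩ : Fin (N - 1)) ≤ ⟨k + 1, h⟩)
    have hne : μ ⟨k + 1, h⟩ ≠ μ ⟨k, by omega⟩ := fun heq => by
      have := two_mul_le_nu_of_add_eq_zero hrel.antitone_fst hrel.antitone_snd hS hT (k + 1) h
        (hrel.add_eq_zero_of_fst_eq (k + 1) (by omega) h heq.symm)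
      rw [hν] at this
      simp only [rhoSig] at this
      omega
    have := ih (by omega)
    omega

lemma mu_eq_zetaSig (hrel : IsRelevantBisignature μ ν)
    (hS : ∀ t, 0 ≤ ∑ s ∈ range t, defect μ ν s) (hT : ∑ s ∈ range (2 * N - 1), defect μ ν s = 0)
    (hν : ν = rhoSig N) : μ = zetaSig N := by
  funext ⟨k, hk⟩
  have hN : 0 < N := by omega
  have hpair : ∀ j (hj : j < N - 1),
      defect μ ν (2 * j) + defect μ ν (2 * j + 1) = (N : ℤ) - 1 - j - μ ⟨j, hj⟩ := fun j hj => by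
    rw [defect_two_mul j (by omega), defect_two_mul_add_one j hj, hν]
    simp only [rhoSig]
    ring
  have hlast : ν ⟨N - 1, by omega⟩ = 0 := by
    rw [hν]
    show (N : ℤ) - 1 - ((N - 1 : ℕ) : ℤ) = 0
    omega
  have hsum := hT
  rw [sum_range_defect_eq hN, hlast, sub_zero] at hsum
  have hzero := (sum_eq_zero_iff_of_nonneg fun j hj => ?_).mp hsum k (mem_range.mpr hk)
  · rw [hpair k hk] at hzero
    simp only [zetaSig]
    omega
  · rw [hpair j (mem_range.mp hj)]
    have := hrel.mu_apply_le hS hT hν j (mem_range.mp hj)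
    omega

end IsRelevantBisignature

end

/-- `(ζ, ρ)` is the unique relevant bisignature dominated by `(ζ, ρ)`:
if `(μ, ν)` is a relevant bisignature (weakly decreasing, and satisfying the relevance
condition `(1.1)` of the paper) with `(ζ,ρ) − (μ,ν)` in the `ℕ`-span of the simple roots
`α_1, …, α_{2N-2}`, then `(μ, ν) = (ζ, ρ)`. -/
theorem relevant_dominated_by_zeta_rho_eq (N : ℕ)
    (μ : Fin (N - 1) → ℤ) (ν : Fin N → ℤ)
    (hμ : ∀ i j : Fin (N - 1), i ≤ j → μ j ≤ μ i)
    (hν : ∀ i j : Fin N, i ≤ j → ν j ≤ ν i)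
    (hrel1 : ∀ i : ℕ, (h : i + 1 < N) →
      ν ⟨i, by omega⟩ = ν ⟨i + 1, h⟩ → ν ⟨i, by omega⟩ + μ ⟨i, by omega⟩ = 0)
    (hrel2 : ∀ i : ℕ, 1 ≤ i → (h : i < N - 1) →
      μ ⟨i - 1, by omega⟩ = μ ⟨i, h⟩ → ν ⟨i, by omega⟩ + μ ⟨i, h⟩ = 0)
    (hdom : ∃ a : Fin (2 * N - 2) → ℕ,
      ((zetaSig N, rhoSig N) : WeightLattice N) - (μ, ν) = ∑ j, (a j : ℤ) • glRoot N j) :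
    μ = zetaSig N ∧ ν = rhoSig N := by
  obtain ⟨a, ha⟩ := hdom
  have hrel : IsRelevantBisignature μ ν := ⟨hμ, hν, hrel1, hrel2⟩
  have hS : ∀ t, 0 ≤ ∑ s ∈ range t, defect μ ν s := by
    rw [defect, ha]
    exact sum_range_interleave_sum_natCast_smul_glRoot_nonneg a
  have hT : ∑ s ∈ range (2 * N - 1), defect μ ν s = 0 := by
    rw [defect, ha]
    exact sum_range_interleave_sum_smul_glRoot_eq_zero _
  have hνρ := hrel.nu_eq_rhoSig hS hT
  exact ⟨hrel.mu_eq_zetaSig hS hT hνρ, hνρ⟩
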